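/- arXiv:2401.11508 — 2 statements merged into one kernel-verified Lean document; each statement's English description precedes it below -/
import Mathlib

section
/- Let H be a bounded self-adjoint operator on ℓ²(ℤ), X the (possibly unbounded) position operator defined by (Xψ)(j) = |j| ψ(j), and δ₀ the canonical basis vector at 0. Suppose there are constants C < ∞, η > 0, v > 0 such that |⟨δ_j, e^{-itH} δ_k⟩| ≤ C e^{-η(|j-k| - v|t|)} for all j, k ∈ ℤ and t ∈ ℝ. Then limsup_{t→∞} (1/t) ‖X e^{-itH} δ₀‖ ≤ v. -/
open Filter NormedSpace
open scoped ENNReal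
set_option maxHeartbeats 1000000

lemma aux_summable {c : ℝ} (hc : 0 < c) :
    Summable (fun j : ℤ => (j : ℝ) ^ 2 * Real.exp (-c * |(j : ℝ)|)) := by
  have hr : ‖Real.exp (-c)‖ < 1 := by
    rw [Real.norm_eq_abs, abs_of_pos (Real.exp_pos _)]
    calc Real.exp (-c) < Real.exp 0 := Real.exp_lt_exp.mpr (by linarith)
      _ = 1 := Real.exp_zero
  have hnat : Summable (fun n : ℕ => (n : ℝ) ^ 2 * Real.exp (-c * n)) := by
    have h := summable_pow_mul_geometric_of_norm_lt_one (R := ℝ) 2 hr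
    refine h.congr fun n => ?_
    rw [← Real.exp_nat_mul, mul_comm (n : ℝ) (-c)]
  refine Summable.of_nat_of_neg ?_ ?_
  · refine hnat.congr fun n => ?_
    push_cast
    rw [abs_of_nonneg (by positivity : (0:ℝ) ≤ (n:ℝ))]
  · refine hnat.congr fun n => ?_
    push_cast
    rw [abs_neg, abs_of_nonneg (by positivity : (0:ℝ) ≤ (n:ℝ)), neg_pow]
    norm_num

/-- If a bounded self-adjoint H on ℓ²(ℤ) satisfies a Lieb-Robinson bound
|⟨δ_j, e^{-itH} δ_k⟩| ≤ C e^{-η(|j-k| - v|t|)}, then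
limsup_{t→∞} (1/t)‖X e^{-itH} δ₀‖ ≤ v, where ‖X e^{-itH}δ₀‖² = Σ_j j²|⟨δ_j, e^{-itH}δ₀⟩|². -/
theorem stmt7 (H : lp (fun _ : ℤ => ℂ) 2 →L[ℂ] lp (fun _ : ℤ => ℂ) 2)
    (hsa : IsSelfAdjoint H) (C η v : ℝ) (hη : 0 < η) (hv : 0 < v)
    (hLR : ∀ (t : ℝ) (j k : ℤ),
      ‖(inner ℂ (lp.single 2 j (1 : ℂ))
          ((NormedSpace.exp ((-(Complex.I * (t : ℂ))) • H)) (lp.single 2 k (1 : ℂ))) : ℂ)‖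
        ≤ C * Real.exp (-η * (|(j : ℝ) - (k : ℝ)| - v * |t|))) :
    Filter.limsup (fun t : ℝ =>
      (1 / t) * Real.sqrt (∑' j : ℤ, (j : ℝ) ^ 2 *
        ‖(inner ℂ (lp.single 2 j (1 : ℂ))
            ((NormedSpace.exp ((-(Complex.I * (t : ℂ))) • H)) (lp.single 2 (0 : ℤ) (1 : ℂ))) : ℂ)‖ ^ 2))
      Filter.atTop ≤ v := by
  classical
  -- basic facts about the Hilbert space
  have hδnorm : ‖(lp.single 2 (0 : ℤ) (1 : ℂ) : lp (fun _ : ℤ => ℂ) 2)‖ = 1 := by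
    simpa using lp.norm_single (p := 2) (by norm_num) (fun _ : ℤ => (1 : ℂ)) 0
  have hδne : (lp.single 2 (0 : ℤ) (1 : ℂ) : lp (fun _ : ℤ => ℂ) 2) ≠ 0 := by
    intro h
    rw [h] at hδnorm
    simp at hδnorm
  haveI : Nontrivial (lp (fun _ : ℤ => ℂ) 2) := ⟨_, _, hδne⟩
  haveI : Nontrivial (lp (fun _ : ℤ => ℂ) 2 →L[ℂ] lp (fun _ : ℤ => ℂ) 2) := by
    refine ⟨1, 0, fun h => hδne ?_⟩
    have := congrArg (fun T : lp (fun _ : ℤ => ℂ) 2 →L[ℂ] lp (fun _ : ℤ => ℂ) 2 =>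
      T (lp.single 2 (0 : ℤ) (1 : ℂ))) h
    simpa using this
  -- unitarity of the evolution
  have hUnorm : ∀ t : ℝ, ‖NormedSpace.exp ((-(Complex.I * (t : ℂ))) • H)‖ = 1 := by
    intro t
    refine CStarRing.norm_of_mem_unitary ?_
    letI : NormedAlgebra ℚ (lp (fun _ : ℤ => ℂ) 2 →L[ℂ] lp (fun _ : ℤ => ℂ) 2) :=
      NormedAlgebra.restrictScalars ℚ ℂ _
    refine NormedSpace.exp_mem_unitary_of_mem_skewAdjoint (hsa.smul_mem_skewAdjoint ?_)
    rw [skewAdjoint.mem_iff]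
    simp [Complex.ext_iff]
  -- the inner products are just coordinates
  have hinner : ∀ (t : ℝ) (j : ℤ),
      ‖(inner ℂ (lp.single 2 j (1 : ℂ))
          ((NormedSpace.exp ((-(Complex.I * (t : ℂ))) • H)) (lp.single 2 (0 : ℤ) (1 : ℂ))) : ℂ)‖
        = ‖((NormedSpace.exp ((-(Complex.I * (t : ℂ))) • H)) (lp.single 2 (0 : ℤ) (1 : ℂ))) j‖ := by
    intro t j
    rw [lp.inner_single_left]
    simp [RCLike.inner_apply]
  have key : ∀ ε : ℝ, 0 < ε → ∀ᶠ t : ℝ in atTop, (1 / t) * Real.sqrt (∑' j : ℤ, (j : ℝ) ^ 2 *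
      ‖(inner ℂ (lp.single 2 j (1 : ℂ))
          ((NormedSpace.exp ((-(Complex.I * (t : ℂ))) • H)) (lp.single 2 (0 : ℤ) (1 : ℂ))) : ℂ)‖ ^ 2)
      ≤ v + 2 * ε := by
    intro ε hε
    set c : ℝ := η * ε / (v + ε) with hcdef
    have hc : 0 < c := by positivity
    set K : ℝ := ∑' j : ℤ, (j : ℝ) ^ 2 * Real.exp (-c * |(j : ℝ)|) with hKdef
    have hKnn : 0 ≤ K := tsum_nonneg fun j => by positivity
    have htend : Tendsto (fun t : ℝ => C ^ 2 * K * Real.exp (-(c * (v + ε)) * t)) atTop (nhds 0) := by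
      have hb : 0 < c * (v + ε) := by positivity
      have h1 : Tendsto (fun t : ℝ => (c * (v + ε)) * t) atTop atTop :=
        Tendsto.const_mul_atTop hb tendsto_id
      have h2 : Tendsto (fun t : ℝ => -(c * (v + ε)) * t) atTop atBot := by
        have heq : (fun t : ℝ => -(c * (v + ε)) * t) = (fun y : ℝ => -y) ∘ (fun t : ℝ => (c * (v + ε)) * t) := by
          funext t; simp [neg_mul]
        rw [heq]
        exact tendsto_neg_atTop_atBot.comp h1
      have h3 := Real.tendsto_exp_atBot.comp h2
      simpa using h3.const_mul (C ^ 2 * K)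
    filter_upwards [htend.eventually_le_const (by norm_num : (0:ℝ) < 1),
      eventually_ge_atTop (max 1 (1 / ε))] with t hsmall htlarge
    have ht1 : (1:ℝ) ≤ t := le_trans (le_max_left _ _) htlarge
    have ht0 : (0:ℝ) < t := lt_of_lt_of_le one_pos ht1
    have htε : 1 / t ≤ ε := by
      rw [div_le_iff₀ ht0]
      have h4 : 1 / ε ≤ t := le_trans (le_max_right _ _) htlarge
      calc (1:ℝ) = ε * (1 / ε) := by field_simp
        _ ≤ ε * t := by exact mul_le_mul_of_nonneg_left h4 hε.le
    set R : ℝ := (v + ε) * t with hRdef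
    have hR0 : 0 ≤ R := by positivity
    set Ψ : lp (fun _ : ℤ => ℂ) 2 :=
      (NormedSpace.exp ((-(Complex.I * (t : ℂ))) • H)) (lp.single 2 (0 : ℤ) (1 : ℂ)) with hΨ
    -- norm of Ψ is at most 1
    have hΨnorm : ‖Ψ‖ ≤ 1 := by
      rw [hΨ]
      calc ‖(NormedSpace.exp ((-(Complex.I * (t : ℂ))) • H)) (lp.single 2 (0 : ℤ) (1 : ℂ))‖
          ≤ ‖NormedSpace.exp ((-(Complex.I * (t : ℂ))) • H)‖ *
            ‖(lp.single 2 (0 : ℤ) (1 : ℂ) : lp (fun _ : ℤ => ℂ) 2)‖ :=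
            ContinuousLinearMap.le_opNorm (NormedSpace.exp ((-(Complex.I * (t : ℂ))) • H))
              (lp.single 2 (0 : ℤ) (1 : ℂ))
        _ = 1 := by rw [hUnorm, hδnorm, one_mul]
    have h2' : (0:ℝ) < (2 : ℝ≥0∞).toReal := by norm_num
    have hrw : ∀ x : ℝ, x ^ (2 : ℝ≥0∞).toReal = x ^ 2 := fun x => by
      rw [show ((2 : ℝ≥0∞).toReal) = ((2:ℕ):ℝ) by norm_num, Real.rpow_natCast]
    have Sa : Summable (fun j : ℤ => ‖Ψ j‖ ^ 2) := by
      have := (lp.memℓp Ψ).summable h2'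
      refine this.congr fun j => ?_
      rw [hrw]
    have hΨsum : (∑' j : ℤ, ‖Ψ j‖ ^ 2) ≤ 1 := by
      have h5 := lp.norm_rpow_eq_tsum h2' Ψ
      simp only [hrw] at h5
      rw [← h5]
      calc ‖Ψ‖ ^ 2 ≤ 1 ^ 2 := pow_le_pow_left₀ (norm_nonneg _) hΨnorm 2
        _ = 1 := one_pow 2
    -- pointwise bound
    have hpt : ∀ j : ℤ, (j : ℝ) ^ 2 * ‖Ψ j‖ ^ 2 ≤
        R ^ 2 * ‖Ψ j‖ ^ 2 +
        (C ^ 2 * Real.exp (-c * R)) * ((j : ℝ) ^ 2 * Real.exp (-c * |(j : ℝ)|)) := by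
      intro j
      rcases le_or_gt |(j : ℝ)| R with hcase | hcase
      · have h1 : (j : ℝ) ^ 2 ≤ R ^ 2 := by nlinarith [abs_nonneg (j : ℝ), sq_abs (j : ℝ)]
        have h2 : 0 ≤ (C ^ 2 * Real.exp (-c * R)) * ((j : ℝ) ^ 2 * Real.exp (-c * |(j : ℝ)|)) := by
          positivity
        have h3 := mul_le_mul_of_nonneg_right h1 (sq_nonneg ‖Ψ j‖)
        linarith
      · have haj : ‖Ψ j‖ ≤ C * Real.exp (-η * (|(j : ℝ)| - v * t)) := by
          have h6 := hLR t j 0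
          rw [hinner t j, ← hΨ] at h6
          simpa [abs_of_pos ht0] using h6
        have hajsq : ‖Ψ j‖ ^ 2 ≤ (C * Real.exp (-η * (|(j : ℝ)| - v * t))) ^ 2 :=
          pow_le_pow_left₀ (norm_nonneg _) haj 2
        have hexp2 : (C * Real.exp (-η * (|(j : ℝ)| - v * t))) ^ 2
            = C ^ 2 * Real.exp (2 * (-η * (|(j : ℝ)| - v * t))) := by
          rw [mul_pow, ← Real.exp_nat_mul]
          norm_num
        have hAineq : c * (R + |(j : ℝ)|) ≤ 2 * η * (|(j : ℝ)| - v * t) := by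
          rw [hcdef, div_mul_eq_mul_div, div_le_iff₀ (by positivity : (0:ℝ) < v + ε)]
          have hjR : R ≤ |(j : ℝ)| := hcase.le
          rw [hRdef] at hjR ⊢
          nlinarith [ht0.le, hη.le, hε.le, hv.le,
            mul_nonneg (mul_nonneg hη.le (show (0:ℝ) ≤ 2 * v + ε by linarith))
              (show (0:ℝ) ≤ |(j : ℝ)| - (v + ε) * t by linarith)]
        have hkey : 2 * (-η * (|(j : ℝ)| - v * t)) ≤ -c * R + -c * |(j : ℝ)| := by linarith
        have h7 : ‖Ψ j‖ ^ 2 ≤ C ^ 2 * (Real.exp (-c * R) * Real.exp (-c * |(j : ℝ)|)) := by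
          rw [← Real.exp_add]
          calc ‖Ψ j‖ ^ 2 ≤ _ := hajsq
            _ = C ^ 2 * Real.exp (2 * (-η * (|(j : ℝ)| - v * t))) := hexp2
            _ ≤ C ^ 2 * Real.exp (-c * R + -c * |(j : ℝ)|) :=
              mul_le_mul_of_nonneg_left (Real.exp_le_exp.mpr hkey) (sq_nonneg C)
        calc (j : ℝ) ^ 2 * ‖Ψ j‖ ^ 2
            ≤ (j : ℝ) ^ 2 * (C ^ 2 * (Real.exp (-c * R) * Real.exp (-c * |(j : ℝ)|))) :=
              mul_le_mul_of_nonneg_left h7 (sq_nonneg _)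
          _ = (C ^ 2 * Real.exp (-c * R)) * ((j : ℝ) ^ 2 * Real.exp (-c * |(j : ℝ)|)) := by ring
          _ ≤ _ := le_add_of_nonneg_left (by positivity)
    have hsum2 : Summable (fun j : ℤ => R ^ 2 * ‖Ψ j‖ ^ 2 +
        (C ^ 2 * Real.exp (-c * R)) * ((j : ℝ) ^ 2 * Real.exp (-c * |(j : ℝ)|))) :=
      (Sa.mul_left _).add ((aux_summable hc).mul_left _)
    have hsum1 : Summable (fun j : ℤ => (j : ℝ) ^ 2 * ‖Ψ j‖ ^ 2) :=
      Summable.of_nonneg_of_le (fun j => by positivity) hpt hsum2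
    have hS : (∑' j : ℤ, (j : ℝ) ^ 2 * ‖Ψ j‖ ^ 2) ≤ R ^ 2 + 1 := by
      have hstep : (∑' j : ℤ, (j : ℝ) ^ 2 * ‖Ψ j‖ ^ 2)
          ≤ R ^ 2 * (∑' j : ℤ, ‖Ψ j‖ ^ 2) + (C ^ 2 * Real.exp (-c * R)) * K := by
        calc (∑' j : ℤ, (j : ℝ) ^ 2 * ‖Ψ j‖ ^ 2) ≤ _ := Summable.tsum_le_tsum hpt hsum1 hsum2
          _ = R ^ 2 * (∑' j : ℤ, ‖Ψ j‖ ^ 2) + (C ^ 2 * Real.exp (-c * R)) * K := by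
            rw [Summable.tsum_add (Sa.mul_left _) ((aux_summable hc).mul_left _),
              tsum_mul_left, tsum_mul_left]
      have hexpR : Real.exp (-c * R) = Real.exp (-(c * (v + ε)) * t) := by
        rw [hRdef]; ring_nf
      have htail : (C ^ 2 * Real.exp (-c * R)) * K ≤ 1 := by
        calc (C ^ 2 * Real.exp (-c * R)) * K
            = C ^ 2 * K * Real.exp (-(c * (v + ε)) * t) := by rw [hexpR]; ring
          _ ≤ 1 := hsmall
      have hfirst : R ^ 2 * (∑' j : ℤ, ‖Ψ j‖ ^ 2) ≤ R ^ 2 * 1 :=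
        mul_le_mul_of_nonneg_left hΨsum (sq_nonneg R)
      linarith
    -- conclude
    have hsqrt : Real.sqrt (∑' j : ℤ, (j : ℝ) ^ 2 * ‖Ψ j‖ ^ 2) ≤ R + 1 := by
      have h8 : (∑' j : ℤ, (j : ℝ) ^ 2 * ‖Ψ j‖ ^ 2) ≤ (R + 1) ^ 2 := by nlinarith
      calc Real.sqrt (∑' j : ℤ, (j : ℝ) ^ 2 * ‖Ψ j‖ ^ 2) ≤ Real.sqrt ((R + 1) ^ 2) :=
            Real.sqrt_le_sqrt h8
        _ = R + 1 := Real.sqrt_sq (by positivity)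
    have hgoal : (∑' j : ℤ, (j : ℝ) ^ 2 *
        ‖(inner ℂ (lp.single 2 j (1 : ℂ))
            ((NormedSpace.exp ((-(Complex.I * (t : ℂ))) • H)) (lp.single 2 (0 : ℤ) (1 : ℂ))) : ℂ)‖ ^ 2)
        = ∑' j : ℤ, (j : ℝ) ^ 2 * ‖Ψ j‖ ^ 2 :=
      tsum_congr fun j => by rw [hinner t j]
    rw [hgoal]
    have h9 : (1 / t) * Real.sqrt (∑' j : ℤ, (j : ℝ) ^ 2 * ‖Ψ j‖ ^ 2) ≤ (1 / t) * (R + 1) :=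
      mul_le_mul_of_nonneg_left hsqrt (by positivity)
    have h10 : (1 / t) * (R + 1) = (v + ε) + 1 / t := by
      rw [hRdef]; field_simp
    calc (1 / t) * Real.sqrt (∑' j : ℤ, (j : ℝ) ^ 2 * ‖Ψ j‖ ^ 2) ≤ (1 / t) * (R + 1) := h9
      _ = (v + ε) + 1 / t := h10
      _ ≤ v + 2 * ε := by linarith
  -- assemble via limsup
  have cobdd : IsCoboundedUnder (· ≤ ·) atTop (fun t : ℝ =>
      (1 / t) * Real.sqrt (∑' j : ℤ, (j : ℝ) ^ 2 *
        ‖(inner ℂ (lp.single 2 j (1 : ℂ))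
            ((NormedSpace.exp ((-(Complex.I * (t : ℂ))) • H)) (lp.single 2 (0 : ℤ) (1 : ℂ))) : ℂ)‖ ^ 2)) := by
    refine isCoboundedUnder_le_of_eventually_le atTop (x := 0) ?_
    filter_upwards [eventually_gt_atTop (0:ℝ)] with t ht
    exact mul_nonneg (div_nonneg zero_le_one ht.le) (Real.sqrt_nonneg _)
  refine le_of_forall_pos_le_add fun ε hε => ?_
  have h11 := Filter.limsup_le_of_le cobdd (key (ε / 2) (half_pos hε))
  calc _ ≤ v + 2 * (ε / 2) := h11
    _ = v + ε := by ring
end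

section
/- Let p ≥ 3, λ > 0, x ∈ ℝ, and let Ã(λ, e^{ix}) be the p×p self-adjoint matrix with real diagonal V₁,…,V_p, off-diagonal entries λ, and corners Ã₁ₚ = λe^{ix}, Ãₚ₁ = λe^{-ix}. Suppose the eigenvalues ζ₁(x),…,ζ_p(x) are pairwise distinct and depend differentiably on x. Then for each ℓ, d/dx ζ_ℓ(x) = −2 λ^p sin(x) · ∏_{j ≠ ℓ} (ζ_ℓ(x) − ζ_j(x))^{-1}. -/
/-- The p×p Floquet matrix Ã(λ, z): diagonal V₁,…,V_p, off-diagonals λ, and corner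
entries Ã₁ₚ = λz, Ãₚ₁ = λ/z (0-based indexing). -/
noncomputable def floquetMatrix (p : ℕ) (V : ℕ → ℝ) (lam : ℝ) (z : ℂ) : Matrix (Fin p) (Fin p) ℂ :=
  Matrix.of fun i j =>
    if (i : ℕ) = (j : ℕ) then (V i : ℂ)
    else if (i : ℕ) + 1 = (j : ℕ) then (lam : ℂ)
    else if (j : ℕ) + 1 = (i : ℕ) then (lam : ℂ)
    else if (i : ℕ) = 0 ∧ (j : ℕ) = p - 1 then (lam : ℂ) * z
    else if (j : ℕ) = 0 ∧ (i : ℕ) = p - 1 then (lam : ℂ) / z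
    else 0

open Matrix Polynomial Complex

lemma aux_det (n : ℕ) (lam : ℂ) (B : Matrix (Fin (n+1)) (Fin (n+1)) ℂ)
    (h0 : ∀ j, B 0 j = if j = Fin.last n then 1 else 0)
    (hlow : ∀ i j : Fin (n+1), (j:ℕ) + 1 < (i:ℕ) → B i j = 0)
    (hsub : ∀ i j : Fin (n+1), (j:ℕ) + 1 = (i:ℕ) → B i j = -lam) :
    B.det = lam ^ n := by
  have hperm := Matrix.det_permute (finRotate (n+1)) B
  have htri : (B.submatrix (finRotate (n+1)) id).BlockTriangular id := by
    intro i j hij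
    simp only [Matrix.submatrix_apply, id_eq, finRotate_succ_apply] at *
    rcases eq_or_lt_of_le (Fin.le_last i) with hi | hi
    · have : i + 1 = 0 := by
        rw [hi]; exact Fin.last_add_one n
      rw [this, h0, if_neg]
      intro hj; rw [hj, ← hi] at hij; exact lt_irrefl _ hij
    · apply hlow
      have hiv : ((i+1 : Fin (n+1)) : ℕ) = (i:ℕ) + 1 := by
        rw [Fin.val_add_one_of_lt hi]
      omega
  have hdiag := Matrix.det_of_upperTriangular htri
  have hprod : ∏ i : Fin (n+1), (B.submatrix (finRotate (n+1)) id) i i = (-lam)^n := by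
    rw [Fin.prod_univ_castSucc]
    have hlast : (B.submatrix (finRotate (n+1)) id) (Fin.last n) (Fin.last n) = 1 := by
      simp only [Matrix.submatrix_apply, id_eq, finRotate_succ_apply, Fin.last_add_one, h0,
        if_pos rfl]
      simp
    rw [hlast, mul_one]
    have : ∀ i : Fin n, (B.submatrix (finRotate (n+1)) id) i.castSucc i.castSucc = -lam := by
      intro i
      simp only [Matrix.submatrix_apply, id_eq, finRotate_succ_apply]
      apply hsub
      rw [Fin.val_add_one_of_lt (Fin.castSucc_lt_last i)]
    rw [Finset.prod_congr rfl (fun i _ => this i), Finset.prod_const]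
    simp
  rw [hdiag, hprod, sign_finRotate] at hperm
  have h2 : ((-1:ℂ))^n * ((-1:ℂ))^n = 1 := by
    rw [← mul_pow]; norm_num
  have : (((((-1:ℤˣ))^n : ℤˣ) : ℤ) : ℂ) = (-1:ℂ)^n := by push_cast; ring
  rw [Nat.add_sub_cancel, this] at hperm
  calc B.det = ((-1:ℂ)^n * (-1:ℂ)^n) * B.det := by rw [h2, one_mul]
    _ = (-1:ℂ)^n * ((-1:ℂ)^n * B.det) := by ring
    _ = (-1:ℂ)^n * (-lam)^n := by rw [← hperm]
    _ = lam ^ n := by rw [← mul_pow]; ring_nf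


lemma eval_charpoly_eq {n : ℕ} (A : Matrix (Fin n) (Fin n) ℂ) (c : ℂ) :
    Polynomial.eval c A.charpoly = (c • (1 : Matrix (Fin n) (Fin n) ℂ) - A).det := by
  rw [Matrix.charpoly, ← Polynomial.coe_evalRingHom, RingHom.map_det]
  congr 1
  ext i j
  by_cases h : i = j
  · subst h
    simp [charmatrix_apply_eq, Matrix.one_apply_eq]
  · simp [charmatrix_apply_ne _ _ _ h, Matrix.one_apply_ne h]

set_option maxHeartbeats 8000000 in
lemma decomp (n : ℕ) (hn : 2 ≤ n) (lam : ℝ) (V : ℕ → ℝ) (c : ℂ) (z : ℂ) :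
    c • (1 : Matrix (Fin (n+1)) (Fin (n+1)) ℂ) - floquetMatrix (n+1) V lam z =
      Matrix.updateRow
        (Matrix.updateRow (c • (1 : Matrix (Fin (n+1)) (Fin (n+1)) ℂ) - floquetMatrix (n+1) V lam 0)
          0 ((c • (1 : Matrix (Fin (n+1)) (Fin (n+1)) ℂ) - floquetMatrix (n+1) V lam 0) 0
              + (-(lam:ℂ)*z) • (Pi.single (Fin.last n) 1 : Fin (n+1) → ℂ)))
        (Fin.last n)
        ((c • (1 : Matrix (Fin (n+1)) (Fin (n+1)) ℂ) - floquetMatrix (n+1) V lam 0) (Fin.last n)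
              + (-(lam:ℂ)*z⁻¹) • (Pi.single 0 1 : Fin (n+1) → ℂ)) := by
  ext i j
  simp only [floquetMatrix, Matrix.sub_apply, Matrix.smul_apply, Matrix.one_apply,
    Matrix.of_apply, Matrix.updateRow_apply, Pi.add_apply, Pi.smul_apply, Pi.single_apply,
    smul_eq_mul, Fin.ext_iff, Fin.val_last, Fin.val_zero]
  have hi := i.isLt
  have hj := j.isLt
  split_ifs
  all_goals try omega
  all_goals try ring
  all_goals try contradiction
  all_goals try (simp only [mul_zero, div_zero, div_eq_mul_inv]; ring)
  all_goals try ((have h : (i:ℕ) = n := by omega); rw [h])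
  all_goals try ((have h : (i:ℕ) = 0 := by omega); rw [h])
  all_goals (split_ifs <;> first | omega | simp)

set_option maxHeartbeats 2000000 in
lemma d1_det (n : ℕ) (hn : 2 ≤ n) (lam : ℝ) (V : ℕ → ℝ) (c : ℂ) :
    (Matrix.updateRow (c • (1 : Matrix (Fin (n+1)) (Fin (n+1)) ℂ) - floquetMatrix (n+1) V lam 0)
      0 (Pi.single (Fin.last n) 1)).det = (lam:ℂ)^n := by
  apply aux_det n (lam:ℂ)
  · intro j
    rw [Matrix.updateRow_self]
    simp [Pi.single_apply]
  · intro i j hij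
    have hi0 : i ≠ 0 := by
      intro h; rw [h] at hij; simp at hij
    rw [Matrix.updateRow_ne hi0]
    simp only [floquetMatrix, Matrix.sub_apply, Matrix.smul_apply, Matrix.one_apply,
      Matrix.of_apply, smul_eq_mul, Fin.ext_iff, Fin.val_zero]
    have hi := i.isLt
    have hj := j.isLt
    split_ifs <;> first
      | omega
      | ring
      | (simp only [mul_zero, mul_one, div_zero, zero_sub, neg_eq_zero]; ring)
  · intro i j hij
    have hi0 : i ≠ 0 := by
      intro h; rw [h] at hij; simp at hij
    rw [Matrix.updateRow_ne hi0]
    simp only [floquetMatrix, Matrix.sub_apply, Matrix.smul_apply, Matrix.one_apply,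
      Matrix.of_apply, smul_eq_mul, Fin.ext_iff, Fin.val_zero]
    have hi := i.isLt
    have hj := j.isLt
    split_ifs <;> first
      | omega
      | ring
      | (simp only [mul_zero, mul_one, div_zero]; ring)

set_option maxHeartbeats 2000000 in
lemma d2_det (n : ℕ) (hn : 2 ≤ n) (lam : ℝ) (V : ℕ → ℝ) (c : ℂ) :
    (Matrix.updateRow (c • (1 : Matrix (Fin (n+1)) (Fin (n+1)) ℂ) - floquetMatrix (n+1) V lam 0)
      (Fin.last n) (Pi.single 0 1)).det = (lam:ℂ)^n := by
  rw [← Matrix.det_submatrix_equiv_self (Fin.revPerm) _]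
  apply aux_det n (lam:ℂ)
  · intro j
    have h00 : Fin.rev (0 : Fin (n+1)) = Fin.last n := by ext; simp [Fin.val_rev]
    simp only [Matrix.submatrix_apply, Fin.revPerm_apply, h00, Matrix.updateRow_self,
      Pi.single_apply]
    by_cases hj : j = Fin.last n
    · rw [if_pos hj, if_pos]
      rw [hj]
      ext; simp [Fin.val_rev]
    · rw [if_neg hj, if_neg]
      intro h
      apply hj
      have := congrArg Fin.rev h
      rw [Fin.rev_rev] at this
      rw [this]; ext; simp [Fin.val_rev]
  · intro i j hij
    have hi0 : Fin.rev i ≠ Fin.last n := by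
      simp only [ne_eq, Fin.ext_iff, Fin.val_rev, Fin.val_last]
      omega
    simp only [Matrix.submatrix_apply, Fin.revPerm_apply]
    rw [Matrix.updateRow_ne hi0]
    simp only [floquetMatrix, Matrix.sub_apply, Matrix.smul_apply, Matrix.one_apply,
      Matrix.of_apply, smul_eq_mul, Fin.ext_iff, Fin.val_zero, Fin.val_rev]
    have hi := i.isLt
    have hj := j.isLt
    split_ifs <;> first
      | omega
      | ring
      | (simp only [mul_zero, mul_one, div_zero, zero_sub, neg_eq_zero]; ring)
  · intro i j hij
    have hi0 : Fin.rev i ≠ Fin.last n := by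
      simp only [ne_eq, Fin.ext_iff, Fin.val_rev, Fin.val_last]
      omega
    simp only [Matrix.submatrix_apply, Fin.revPerm_apply]
    rw [Matrix.updateRow_ne hi0]
    simp only [floquetMatrix, Matrix.sub_apply, Matrix.smul_apply, Matrix.one_apply,
      Matrix.of_apply, smul_eq_mul, Fin.ext_iff, Fin.val_zero, Fin.val_rev]
    have hi := i.isLt
    have hj := j.isLt
    split_ifs <;> first
      | omega
      | ring
      | (simp only [mul_zero, mul_one, div_zero]; ring)

lemma updateRow_swap {n : Type*} [DecidableEq n] {R : Type*} (M : Matrix n n R)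
    (i1 i2 : n) (h : i1 ≠ i2) (r1 r2 : n → R) :
    Matrix.updateRow (Matrix.updateRow M i1 r1) i2 r2 =
      Matrix.updateRow (Matrix.updateRow M i2 r2) i1 r1 := by
  ext i j
  simp only [Matrix.updateRow_apply]
  split_ifs with h1 h2
  · exact absurd (h1 ▸ h2) (Ne.symm h)
  · rfl
  · rfl
  · rfl

lemma key_det (n : ℕ) (hn : 2 ≤ n) (lam : ℝ) (V : ℕ → ℝ) (c : ℂ) :
    ∃ K : ℂ, ∀ z : ℂ, z ≠ 0 →
      Polynomial.eval c (Matrix.charpoly (floquetMatrix (n+1) V lam z)) =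
        K - (lam:ℂ)^(n+1) * z - (lam:ℂ)^(n+1) * z⁻¹ := by
  set N : Matrix (Fin (n+1)) (Fin (n+1)) ℂ :=
    c • (1 : Matrix (Fin (n+1)) (Fin (n+1)) ℂ) - floquetMatrix (n+1) V lam 0 with hN
  have hL0 : (Fin.last n) ≠ (0 : Fin (n+1)) := by
    simp only [ne_eq, Fin.ext_iff, Fin.val_last, Fin.val_zero]
    omega
  refine ⟨N.det + (lam:ℂ)^2 * (Matrix.updateRow (Matrix.updateRow N (Fin.last n) (Pi.single 0 1))
      0 (Pi.single (Fin.last n) 1)).det, ?_⟩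
  intro z hz
  rw [eval_charpoly_eq, decomp n hn lam V c z, ← hN]
  set eL : Fin (n+1) → ℂ := Pi.single (Fin.last n) 1 with heL
  set e0 : Fin (n+1) → ℂ := Pi.single 0 1 with he0
  set M2 := Matrix.updateRow N 0 (N 0 + (-(lam:ℂ)*z) • eL) with hM2
  have hM2L : M2 (Fin.last n) = N (Fin.last n) := Matrix.updateRow_ne hL0
  have step1 : (Matrix.updateRow M2 (Fin.last n) (N (Fin.last n) + (-(lam:ℂ)*z⁻¹) • e0)).det
      = M2.det + (-(lam:ℂ)*z⁻¹) * (Matrix.updateRow M2 (Fin.last n) e0).det := by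
    rw [Matrix.det_updateRow_add, Matrix.det_updateRow_smul, ← hM2L,
      Matrix.updateRow_eq_self]
  have step2 : M2.det = N.det + (-(lam:ℂ)*z) * (Matrix.updateRow N 0 eL).det := by
    rw [hM2, Matrix.det_updateRow_add, Matrix.det_updateRow_smul, Matrix.updateRow_eq_self]
  have step3 : (Matrix.updateRow M2 (Fin.last n) e0).det
      = (Matrix.updateRow N (Fin.last n) e0).det
        + (-(lam:ℂ)*z) * (Matrix.updateRow (Matrix.updateRow N (Fin.last n) e0) 0 eL).det := by
    rw [hM2, updateRow_swap N 0 (Fin.last n) (Ne.symm hL0),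
      Matrix.det_updateRow_add, Matrix.det_updateRow_smul]
    congr 2
    have h0L : (Matrix.updateRow N (Fin.last n) e0) 0 = N 0 :=
      Matrix.updateRow_ne (Ne.symm hL0)
    rw [← h0L, Matrix.updateRow_eq_self]
  rw [step1, step2, step3, d1_det n hn lam V c, d2_det n hn lam V c]
  have hzz : z * z⁻¹ = 1 := mul_inv_cancel₀ hz
  field_simp
  ring

/-- Derivative of the eigenvalues of the Floquet matrix Ã(λ, e^{ix}):
d/dx ζ_ℓ(x) = −2 λ^p sin(x) ∏_{j ≠ ℓ} (ζ_ℓ(x) − ζ_j(x))⁻¹. -/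
theorem stmt16 (p : ℕ) (hp : 3 ≤ p) (lam : ℝ) (hlam : 0 < lam) (V : ℕ → ℝ)
    (ζ ζ' : Fin p → ℝ → ℂ)
    (hder : ∀ (ℓ : Fin p) (x : ℝ), HasDerivAt (ζ ℓ) (ζ' ℓ x) x)
    (hdist : ∀ (x : ℝ) (ℓ m : Fin p), ℓ ≠ m → ζ ℓ x ≠ ζ m x)
    (hchar : ∀ x : ℝ,
      (floquetMatrix p V lam (Complex.exp (Complex.I * x))).charpoly =
        ∏ j : Fin p, (Polynomial.X - Polynomial.C (ζ j x)))
    (ℓ : Fin p) (x : ℝ) :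
    ζ' ℓ x = (-2 * (lam : ℂ) ^ p * Real.sin x) *
      ∏ j ∈ Finset.univ.erase ℓ, (ζ ℓ x - ζ j x)⁻¹ := by
  obtain ⟨n, rfl⟩ : ∃ n, p = n + 1 := ⟨p - 1, by omega⟩
  have hn : 2 ≤ n := by omega
  set c := ζ ℓ x with hc
  obtain ⟨K, hK⟩ := key_det n hn lam V c
  have hg : ∀ t : ℝ, (∏ j : Fin (n+1), (c - ζ j t)) =
      K - (lam:ℂ)^(n+1) * Complex.exp (Complex.I * t)
        - (lam:ℂ)^(n+1) * Complex.exp (-(Complex.I * t)) := by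
    intro t
    have h1 : Complex.exp (Complex.I * t) ≠ 0 := Complex.exp_ne_zero _
    have h2 := hK (Complex.exp (Complex.I * t)) h1
    rw [hchar t, ← Complex.exp_neg] at h2
    rw [← h2]
    simp [Polynomial.eval_prod]
  -- derivative of the exponential side
  have hz1 : HasDerivAt (fun w : ℂ => Complex.exp (Complex.I * w))
      (Complex.exp (Complex.I * ↑x) * Complex.I) ↑x := by
    simpa [Function.comp_def] using (Complex.hasDerivAt_exp (Complex.I * ↑x)).comp (↑x : ℂ)
      ((hasDerivAt_id (↑x : ℂ)).const_mul Complex.I)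
  have hz2 : HasDerivAt (fun w : ℂ => Complex.exp (-(Complex.I * w)))
      (Complex.exp (-(Complex.I * ↑x)) * (-Complex.I)) ↑x := by
    simpa [Function.comp_def] using (Complex.hasDerivAt_exp (-(Complex.I * ↑x))).comp (↑x : ℂ)
      (((hasDerivAt_id (↑x : ℂ)).const_mul Complex.I).neg)
  have hexp1 : HasDerivAt (fun t : ℝ => Complex.exp (Complex.I * t))
      (Complex.exp (Complex.I * ↑x) * Complex.I) x := hz1.comp_ofReal
  have hexp2 : HasDerivAt (fun t : ℝ => Complex.exp (-(Complex.I * t)))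
      (Complex.exp (-(Complex.I * ↑x)) * (-Complex.I)) x := hz2.comp_ofReal
  have hrhs : HasDerivAt (fun t : ℝ => K - (lam:ℂ)^(n+1) * Complex.exp (Complex.I * t)
        - (lam:ℂ)^(n+1) * Complex.exp (-(Complex.I * t)))
      (0 - (lam:ℂ)^(n+1) * (Complex.exp (Complex.I * ↑x) * Complex.I)
        - (lam:ℂ)^(n+1) * (Complex.exp (-(Complex.I * ↑x)) * (-Complex.I))) x :=
    ((hasDerivAt_const x K).sub (hexp1.const_mul ((lam:ℂ)^(n+1)))).sub
      (hexp2.const_mul ((lam:ℂ)^(n+1)))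
  have hlhs : HasDerivAt (fun t : ℝ => ∏ j : Fin (n+1), (c - ζ j t))
      (∑ j : Fin (n+1), (∏ k ∈ Finset.univ.erase j, (c - ζ k x)) • (-(ζ' j x))) x :=
    HasDerivAt.fun_finset_prod (fun j _ => (hder j x).const_sub c)
  have hfuneq : (fun t : ℝ => ∏ j : Fin (n+1), (c - ζ j t))
      = (fun t : ℝ => K - (lam:ℂ)^(n+1) * Complex.exp (Complex.I * t)
        - (lam:ℂ)^(n+1) * Complex.exp (-(Complex.I * t))) := funext hg
  have huniq : (∑ j : Fin (n+1), (∏ k ∈ Finset.univ.erase j, (c - ζ k x)) • (-(ζ' j x)))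
      = (0 - (lam:ℂ)^(n+1) * (Complex.exp (Complex.I * ↑x) * Complex.I)
        - (lam:ℂ)^(n+1) * (Complex.exp (-(Complex.I * ↑x)) * (-Complex.I))) :=
    (hfuneq ▸ hlhs).unique hrhs
  set P := ∏ k ∈ Finset.univ.erase ℓ, (c - ζ k x) with hP
  have hsum : (∑ j : Fin (n+1), (∏ k ∈ Finset.univ.erase j, (c - ζ k x)) • (-(ζ' j x)))
      = P * (-(ζ' ℓ x)) := by
    rw [Finset.sum_eq_single ℓ]
    · rw [smul_eq_mul]
    · intro b _ hb
      have hmem : ℓ ∈ Finset.univ.erase b := Finset.mem_erase.mpr ⟨Ne.symm hb, Finset.mem_univ ℓ⟩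
      rw [Finset.prod_eq_zero hmem (by rw [hc, sub_self]), zero_smul]
    · intro h; exact absurd (Finset.mem_univ ℓ) h
  have hD2 : (0 - (lam:ℂ)^(n+1) * (Complex.exp (Complex.I * ↑x) * Complex.I)
        - (lam:ℂ)^(n+1) * (Complex.exp (-(Complex.I * ↑x)) * (-Complex.I)))
      = 2 * (lam:ℂ)^(n+1) * (Real.sin x : ℂ) := by
    have e1 : Complex.exp (Complex.I * ↑x) = Complex.cos ↑x + Complex.sin ↑x * Complex.I := by
      rw [mul_comm]; exact Complex.exp_mul_I _
    have e2 : Complex.exp (-(Complex.I * ↑x)) = Complex.cos ↑x - Complex.sin ↑x * Complex.I := by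
      rw [show -(Complex.I * (↑x:ℂ)) = (-(↑x:ℂ)) * Complex.I by ring, Complex.exp_mul_I,
        Complex.cos_neg, Complex.sin_neg]
      ring
    rw [e1, e2, Complex.ofReal_sin]
    linear_combination (-2 * (lam:ℂ)^(n+1) * Complex.sin ↑x) * Complex.I_sq
  have eqn : P * (-(ζ' ℓ x)) = 2 * (lam:ℂ)^(n+1) * Complex.sin ↑x := by
    rw [← hsum, huniq, hD2, Complex.ofReal_sin]
  have hPne : P ≠ 0 := by
    rw [hP]
    apply Finset.prod_ne_zero_iff.mpr
    intro k hk
    exact sub_ne_zero_of_ne (hdist x ℓ k (Ne.symm (Finset.mem_erase.mp hk).1))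
  have hfin : ζ' ℓ x = -(2*(lam:ℂ)^(n+1)*Complex.sin ↑x) * P⁻¹ := by
    field_simp
    linear_combination -eqn
  rw [hfin, Finset.prod_inv_distrib, ← hP, Complex.ofReal_sin]
  ring
end
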